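/- Lower bound of Theorem 3.1 (Lemma 3.4): For every integer n ≥ 2 and every δ > 0, there exist a profile (f_1,…,f_n) of piecewise constant value density functions on [0,1] and a piecewise constant misreport f_1' such that, for every complete allocation A maximizing ∏_{i=1}^n v_i(A_i) with respect to (f_1,…,f_n), there exists a complete allocation A' maximizing the Nash product with respect to (f_1', f_2,…,f_n) satisfying v_1(A_1') ≥ (2 − 1/n − δ) · v_1(A_1). Consequently, the incentive ratio of the Maximum Nash Welfare mechanism is at least 2 − 1/n. -/

import Mathlib

open MeasureTheory Set

noncomputable def cakeval (f : ℝ → ℝ) (S : Set ℝ) : ℝ := ∫ x in S, f x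

def PiecewiseConstant (f : ℝ → ℝ) : Prop :=
  ∃ (m : ℕ) (a : Fin (m + 1) → ℝ) (c : Fin m → ℝ),
    a 0 = 0 ∧ a (Fin.last m) = 1 ∧ Monotone a ∧
    ∀ t : Fin m, ∀ x ∈ Set.Ico (a t.castSucc) (a t.succ), f x = c t

def ValidDensity (f : ℝ → ℝ) : Prop :=
  PiecewiseConstant f ∧ (∀ x, 0 ≤ f x) ∧ 0 < cakeval f (Set.Icc 0 1)

def FinUnionIcc (S : Set ℝ) : Prop :=
  ∃ (k : ℕ) (a b : Fin k → ℝ), S = ⋃ j, Set.Icc (a j) (b j)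

def IsAllocOn {n : ℕ} (C : Set ℝ) (A : Fin n → Set ℝ) : Prop :=
  (∀ i, A i ⊆ C) ∧ (∀ i, FinUnionIcc (A i)) ∧
    Pairwise fun i j => volume (A i ∩ A j) = 0

def IsAlloc {n : ℕ} (A : Fin n → Set ℝ) : Prop := IsAllocOn (Set.Icc 0 1) A

def CompleteAlloc {n : ℕ} (A : Fin n → Set ℝ) : Prop := (⋃ i, A i) = Set.Icc (0 : ℝ) 1

noncomputable def nashProd {n : ℕ} (f : Fin n → ℝ → ℝ) (A : Fin n → Set ℝ) : ℝ :=
  ∏ i, cakeval (f i) (A i)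

def IsMNWOn {n : ℕ} (C : Set ℝ) (f : Fin n → ℝ → ℝ) (A : Fin n → Set ℝ) : Prop :=
  IsAllocOn C A ∧ ∀ B : Fin n → Set ℝ, IsAllocOn C B → nashProd f B ≤ nashProd f A

def IsMNW {n : ℕ} (f : Fin n → ℝ → ℝ) (A : Fin n → Set ℝ) : Prop :=
  IsMNWOn (Set.Icc 0 1) f A

def IsCompleteMNW {n : ℕ} (f : Fin n → ℝ → ℝ) (A : Fin n → Set ℝ) : Prop :=
  IsAlloc A ∧ CompleteAlloc A ∧
    ∀ B : Fin n → Set ℝ, IsAlloc B → CompleteAlloc B → nashProd f B ≤ nashProd f A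


/-!
Agent 1 values the cake uniformly, the other `n - 1` agents value only `[1/n, 1]`, uniformly.
If agent 1 holds late mass `w` (measured by the others' density), AM–GM bounds the Nash product
by `(1 + (n - 1) w) (1 - w)^(n - 1)` times that of the equal cuts `[i/n, (i+1)/n]`, and
Bernoulli's inequality makes this factor `< 1` for `w > 0`; so every MNW allocation gives agent 1
value at most `1/n`. If agent 1 reports the others' density instead, all agents are identical,
AM–GM caps the Nash product at `(1/n)^n`, and this is attained by an allocation giving everyone
late value `1/n` in which agent 1 also receives all of `[0, 1/n]`: true value `(2 - 1/n)/n`.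
-/

lemma FinUnionIcc.measurableSet {S : Set ℝ} (h : FinUnionIcc S) : MeasurableSet S := by
  obtain ⟨k, a, b, rfl⟩ := h
  exact .iUnion fun j => measurableSet_Icc

lemma cakeval_nonneg {f : ℝ → ℝ} (hf : ∀ x, 0 ≤ f x) (S : Set ℝ) : 0 ≤ cakeval f S :=
  integral_nonneg hf

lemma cakeval_one (S : Set ℝ) : cakeval 1 S = volume.real S := by
  simp [cakeval]

lemma cakeval_indicator_Ici (r c : ℝ) (S : Set ℝ) :
    cakeval ((Ici r).indicator fun _ => c) S = c * volume.real (S ∩ Ici r) := by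
  rw [cakeval, setIntegral_indicator measurableSet_Ici, setIntegral_const, smul_eq_mul, mul_comm]

lemma IsAllocOn.sum_cakeval_le {n : ℕ} {C : Set ℝ} {A : Fin n → Set ℝ} (hA : IsAllocOn C A)
    {f : ℝ → ℝ} (hf : ∀ x, 0 ≤ f x) (hfC : IntegrableOn f C) :
    ∑ i, cakeval f (A i) ≤ cakeval f C := by
  obtain ⟨hsub, hunion, hdisj⟩ := hA
  have hU : ⋃ i, A i ⊆ C := iUnion_subset hsub
  calc ∑ i, cakeval f (A i) = cakeval f (⋃ i, A i) := by
        rw [cakeval, integral_iUnion_ae (fun i => (hunion i).measurableSet.nullMeasurableSet)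
          hdisj (hfC.mono_set hU), tsum_fintype]
        rfl
    _ ≤ cakeval f C := setIntegral_mono_set hfC (.of_forall hf) hU.eventuallyLE

lemma measureReal_le_add_measureReal_inter_Ici {S : Set ℝ} (hS : S ⊆ Icc 0 1) {r : ℝ}
    (hr : 0 ≤ r) : volume.real S ≤ r + volume.real (S ∩ Ici r) := by
  have hfin : volume S ≠ ⊤ := ((measure_mono hS).trans_lt measure_Icc_lt_top).ne
  have hlow : S \ Ici r ⊆ Icc 0 r := fun x ⟨hxS, hxr⟩ => ⟨(hS hxS).1, (not_le.1 hxr).le⟩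
  rw [← measureReal_inter_add_sdiff measurableSet_Ici hfin, add_comm]
  gcongr
  calc volume.real (S \ Ici r) ≤ volume.real (Icc 0 r) :=
        measureReal_mono hlow measure_Icc_lt_top.ne
    _ = r := by rw [Real.volume_real_Icc_of_le hr, sub_zero]

lemma prod_le_pow_of_sum_le {ι : Type*} (s : Finset ι) {z : ι → ℝ} (hz : ∀ i ∈ s, 0 ≤ z i)
    {S : ℝ} (hS : ∑ i ∈ s, z i ≤ S) : ∏ i ∈ s, z i ≤ (S / s.card) ^ s.card := by
  rcases s.eq_empty_or_nonempty with rfl | hs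
  · simp
  have hcard : (0 : ℝ) < s.card := by exact_mod_cast hs.card_pos
  have hamgm := Real.geom_mean_le_arith_mean s (fun _ => 1) z (fun _ _ => zero_le_one)
    (by simpa using hcard) hz
  simp only [Real.rpow_one, one_mul, Finset.sum_const, nsmul_eq_mul, mul_one] at hamgm
  calc ∏ i ∈ s, z i = ((∏ i ∈ s, z i) ^ ((s.card : ℝ))⁻¹) ^ s.card :=
        (Real.rpow_inv_natCast_pow (Finset.prod_nonneg hz) hs.card_pos.ne').symm
    _ ≤ (S / s.card) ^ s.card := by
        gcongr
        · exact Real.rpow_nonneg (Finset.prod_nonneg hz) _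
        · exact hamgm.trans (by gcongr)

lemma one_add_mul_mul_one_sub_pow_lt_one {w : ℝ} (hw0 : 0 < w) (hw1 : w ≤ 1) {k : ℕ}
    (hk : k ≠ 0) : (1 + k * w) * (1 - w) ^ k < 1 :=
  calc (1 + k * w) * (1 - w) ^ k ≤ (1 + w) ^ k * (1 - w) ^ k := by
        gcongr
        exact one_add_mul_le_pow (by linarith) k
    _ = (1 - w ^ 2) ^ k := by rw [← mul_pow]; ring
    _ < 1 := pow_lt_one₀ (by nlinarith) (by nlinarith) hk

lemma piecewiseConstant_const (c : ℝ) : PiecewiseConstant fun _ => c :=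
  ⟨1, fun i => i, fun _ => c, by simp, by simp, fun _ _ h => Nat.cast_le.2 h,
    fun _ _ _ => rfl⟩

lemma piecewiseConstant_indicator_Ici {r : ℝ} (hr0 : 0 ≤ r) (hr1 : r ≤ 1) (c : ℝ) :
    PiecewiseConstant ((Ici r).indicator fun _ => c) := by
  refine ⟨2, ![0, r, 1], ![0, c], rfl, rfl, ?_, ?_⟩
  · intro i j hij
    fin_cases i <;> fin_cases j <;> simp_all [Fin.le_def]
  · intro t x hx
    fin_cases t
    · exact indicator_of_notMem (not_le.2 hx.2) _
    · exact indicator_of_mem hx.1 _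

def cutAlloc (n : ℕ) (q : ℕ → ℝ) : Fin n → Set ℝ := fun i => Icc (q i) (q (i + 1))

section CutAlloc

variable {q : ℕ → ℝ}

lemma iUnion_cutAlloc (hq : Monotone q) :
    ∀ m : ℕ, ⋃ i, cutAlloc (m + 1) q i = Icc (q 0) (q (m + 1))
  | 0 => by simp [cutAlloc, iUnion_const]
  | m + 1 => by
    rw [iUnion_fin_add_one_eq_iUnion_castSucc]
    change (⋃ i, cutAlloc (m + 1) q i) ∪ _ = _
    rw [iUnion_cutAlloc hq m, cutAlloc, Fin.val_last,
      Icc_union_Icc_eq_Icc (hq (Nat.zero_le _)) (hq (Nat.le_succ _))]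

lemma volume_cutAlloc_inter {n : ℕ} (hq : Monotone q) {i j : Fin n} (hij : i < j) :
    volume (cutAlloc n q i ∩ cutAlloc n q j) = 0 := by
  have hle : q (i + 1) ≤ q j := hq (Nat.succ_le_of_lt hij)
  refine measure_mono_null (fun x ⟨⟨_, hxi⟩, hxj, _⟩ => ?_) (Real.volume_singleton (a := q j))
  exact le_antisymm (hxi.trans hle) hxj

lemma isAlloc_cutAlloc {n : ℕ} (hq : Monotone q) (h0 : q 0 = 0) (h1 : q n = 1) :
    IsAlloc (cutAlloc n q) := by
  refine ⟨fun i => ?_, fun i => ⟨1, fun _ => q i, fun _ => q (i + 1), (iUnion_const _).symm⟩,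
    fun i j hij => ?_⟩
  · rw [← h0, ← h1]
    exact Icc_subset_Icc (hq (Nat.zero_le _)) (hq i.isLt)
  · rcases hij.lt_or_gt with h | h
    · exact volume_cutAlloc_inter hq h
    · rw [inter_comm]
      exact volume_cutAlloc_inter hq h

lemma completeAlloc_cutAlloc {n : ℕ} (hn : n ≠ 0) (hq : Monotone q) (h0 : q 0 = 0)
    (h1 : q n = 1) : CompleteAlloc (cutAlloc n q) := by
  obtain ⟨m, rfl⟩ := Nat.exists_eq_succ_of_ne_zero hn
  rw [CompleteAlloc, iUnion_cutAlloc hq, h0, h1]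

end CutAlloc

noncomputable def lateDensity (n : ℕ) : ℝ → ℝ :=
  (Ici (1 / n : ℝ)).indicator fun _ => n / (n - 1)

noncomputable def hardProfile (n : ℕ) (i₀ : Fin n) : Fin n → ℝ → ℝ :=
  Function.update (fun _ => lateDensity n) i₀ 1

section Instance

variable {n : ℕ}

lemma lateDensity_nonneg (x : ℝ) : 0 ≤ lateDensity n x := by
  refine indicator_nonneg (fun _ _ => ?_) x
  rcases n with _ | n
  · simp
  · push_cast
    rw [add_sub_cancel_right]
    positivity

lemma integrableOn_lateDensity : IntegrableOn (lateDensity n) (Icc 0 1) :=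
  (integrableOn_const measure_Icc_lt_top.ne).indicator measurableSet_Ici

lemma cakeval_lateDensity_Icc {a b : ℝ} (h : max a (1 / n) ≤ b) :
    cakeval (lateDensity n) (Icc a b) = n / (n - 1) * (b - max a (1 / n)) := by
  rw [lateDensity, cakeval_indicator_Ici, ← Real.volume_real_Icc_of_le h]
  congr 2
  ext x
  simp only [mem_inter_iff, mem_Icc, mem_Ici, max_le_iff]
  tauto

lemma cakeval_lateDensity_Icc_zero_one (hn : 2 ≤ n) : cakeval (lateDensity n) (Icc 0 1) = 1 := by
  have hN : (2 : ℝ) ≤ n := by exact_mod_cast hn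
  have hN1 : (n : ℝ) - 1 ≠ 0 := by linarith
  have hmax : max 0 (1 / (n : ℝ)) = 1 / n := max_eq_right (by positivity)
  rw [cakeval_lateDensity_Icc (by rw [hmax, div_le_one (by positivity)]; linarith), hmax]
  field_simp

lemma validDensity_lateDensity (hn : 2 ≤ n) : ValidDensity (lateDensity n) := by
  have hN : (2 : ℝ) ≤ n := by exact_mod_cast hn
  refine ⟨piecewiseConstant_indicator_Ici (by positivity)
    (by rw [div_le_one (by positivity)]; linarith) _, lateDensity_nonneg, ?_⟩
  rw [cakeval_lateDensity_Icc_zero_one hn]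
  exact one_pos

lemma validDensity_one : ValidDensity 1 :=
  ⟨piecewiseConstant_const 1, fun _ => zero_le_one, by
    rw [cakeval_one, Real.volume_real_Icc_of_le zero_le_one]
    norm_num⟩

lemma validDensity_hardProfile (hn : 2 ≤ n) (i₀ i : Fin n) : ValidDensity (hardProfile n i₀ i) := by
  rcases eq_or_ne i i₀ with rfl | h
  · rw [hardProfile, Function.update_self]
    exact validDensity_one
  · rw [hardProfile, Function.update_of_ne h]
    exact validDensity_lateDensity hn

lemma nashProd_lateDensity_le (hn : 2 ≤ n) {B : Fin n → Set ℝ} (hB : IsAlloc B) :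
    nashProd (fun _ => lateDensity n) B ≤ (1 / n) ^ n := by
  have hsum := hB.sum_cakeval_le (f := lateDensity n) lateDensity_nonneg integrableOn_lateDensity
  rw [cakeval_lateDensity_Icc_zero_one hn] at hsum
  simpa [nashProd] using prod_le_pow_of_sum_le Finset.univ
    (fun i _ => cakeval_nonneg lateDensity_nonneg (B i)) hsum

lemma nashProd_hardProfile (i₀ : Fin n) (A : Fin n → Set ℝ) :
    nashProd (hardProfile n i₀) A =
      volume.real (A i₀) * ∏ i ∈ Finset.univ.erase i₀, cakeval (lateDensity n) (A i) := by
  rw [nashProd, ← Finset.mul_prod_erase _ _ (Finset.mem_univ i₀), hardProfile,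
    Function.update_self, cakeval_one]
  congr 1
  exact Finset.prod_congr rfl fun i hi => by rw [Function.update_of_ne (Finset.ne_of_mem_erase hi)]

end Instance

/-- Agent `0` gets `[0, 1/n + d]` and the others consecutive intervals of length
`d = (n - 1) / n²`, so that every piece is worth `1/n` under `lateDensity n`. -/
noncomputable def misreportCuts (n i : ℕ) : ℝ :=
  if i = 0 then 0 else 1 / n + i * ((n - 1) / n ^ 2)

section Misreport

variable {n : ℕ}

lemma misreportCuts_zero : misreportCuts n 0 = 0 := if_pos rfl

lemma misreportCuts_succ (i : ℕ) :
    misreportCuts n (i + 1) = 1 / n + (i + 1) * ((n - 1) / n ^ 2) := by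
  simp [misreportCuts]

lemma max_misreportCuts (hn : 2 ≤ n) (i : ℕ) :
    max (misreportCuts n i) (1 / n) = 1 / n + i * ((n - 1) / n ^ 2) := by
  have hN : (2 : ℝ) ≤ n := by exact_mod_cast hn
  have hd : 0 ≤ ((n : ℝ) - 1) / n ^ 2 := div_nonneg (by linarith) (by positivity)
  rcases i with _ | i
  · simp [misreportCuts_zero]
  · rw [misreportCuts_succ, max_eq_left (le_add_of_nonneg_right (by positivity))]
    push_cast
    ring

lemma monotone_misreportCuts (hn : 2 ≤ n) : Monotone (misreportCuts n) := by
  have hN : (2 : ℝ) ≤ n := by exact_mod_cast hn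
  have hd : 0 ≤ ((n : ℝ) - 1) / n ^ 2 := div_nonneg (by linarith) (by positivity)
  refine monotone_nat_of_le_succ fun i => ?_
  rcases i with _ | i
  · rw [misreportCuts_succ, misreportCuts_zero]
    positivity
  · rw [misreportCuts_succ, misreportCuts_succ]
    gcongr
    linarith

lemma misreportCuts_self (hn : 2 ≤ n) : misreportCuts n n = 1 := by
  have hN : (2 : ℝ) ≤ n := by exact_mod_cast hn
  rw [misreportCuts, if_neg (by omega)]
  field_simp
  ring

lemma cakeval_lateDensity_cutAlloc_misreportCuts (hn : 2 ≤ n) (i : Fin n) :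
    cakeval (lateDensity n) (cutAlloc n (misreportCuts n) i) = 1 / n := by
  have hN : (2 : ℝ) ≤ n := by exact_mod_cast hn
  have hN1 : (n : ℝ) - 1 ≠ 0 := by linarith
  have hd : 0 ≤ ((n : ℝ) - 1) / n ^ 2 := div_nonneg (by linarith) (by positivity)
  have hlen := max_misreportCuts hn i
  rw [cutAlloc, cakeval_lateDensity_Icc, hlen, misreportCuts_succ]
  · field_simp
    ring
  · rw [hlen, misreportCuts_succ]
    gcongr
    simp

lemma isCompleteMNW_cutAlloc_misreportCuts (hn : 2 ≤ n) :
    IsCompleteMNW (fun _ => lateDensity n) (cutAlloc n (misreportCuts n)) := by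
  have hmono := monotone_misreportCuts hn
  refine ⟨isAlloc_cutAlloc hmono misreportCuts_zero (misreportCuts_self hn),
    completeAlloc_cutAlloc (by omega) hmono misreportCuts_zero (misreportCuts_self hn),
    fun B hB _ => (nashProd_lateDensity_le hn hB).trans_eq ?_⟩
  rw [nashProd, Finset.prod_congr rfl fun i _ => cakeval_lateDensity_cutAlloc_misreportCuts hn i,
    Finset.prod_const, Finset.card_univ, Fintype.card_fin]

lemma volume_real_cutAlloc_misreportCuts_zero (hn : 2 ≤ n) :
    volume.real (cutAlloc n (misreportCuts n) ⟨0, zero_lt_two.trans_le hn⟩) = (2 - 1 / n) / n := by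
  have hN : (2 : ℝ) ≤ n := by exact_mod_cast hn
  have hle := monotone_misreportCuts hn (Nat.zero_le 1)
  rw [cutAlloc, Real.volume_real_Icc_of_le hle, misreportCuts_zero,
    misreportCuts_succ 0]
  field_simp
  ring

end Misreport

section Truthful

variable {n : ℕ}

lemma nashProd_hardProfile_cutAlloc_div (hn : 2 ≤ n) :
    nashProd (hardProfile n ⟨0, zero_lt_two.trans_le hn⟩) (cutAlloc n fun i => i / n) =
      1 / n * (1 / (n - 1)) ^ (n - 1) := by
  have hN : (2 : ℝ) ≤ n := by exact_mod_cast hn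
  have hN1 : (n : ℝ) - 1 ≠ 0 := by linarith
  have hothers : ∀ i ∈ Finset.univ.erase (⟨0, zero_lt_two.trans_le hn⟩ : Fin n),
      cakeval (lateDensity n) (cutAlloc n (fun i => i / n) i) = 1 / (n - 1) := by
    intro i hi
    have hi1 : (1 : ℝ) ≤ (i : ℕ) := by
      have := Finset.ne_of_mem_erase hi
      exact_mod_cast Nat.one_le_iff_ne_zero.2 fun h => this (Fin.ext h)
    have hmax : max ((i : ℕ) / (n : ℝ)) (1 / n) = (i : ℕ) / n := max_eq_left (by gcongr)
    rw [cutAlloc, cakeval_lateDensity_Icc (by rw [hmax]; gcongr; simp), hmax]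
    field_simp
    push_cast
    ring
  rw [nashProd_hardProfile, Finset.prod_congr rfl hothers, Finset.prod_const,
    Finset.card_erase_of_mem (Finset.mem_univ _), Finset.card_univ, Fintype.card_fin, cutAlloc,
    Real.volume_real_Icc_of_le (by gcongr; simp)]
  simp

lemma cakeval_lateDensity_le_one (hn : 2 ≤ n) {S : Set ℝ} (hS : S ⊆ Icc 0 1) :
    cakeval (lateDensity n) S ≤ 1 :=
  (setIntegral_mono_set integrableOn_lateDensity (.of_forall lateDensity_nonneg)
    hS.eventuallyLE).trans_eq (cakeval_lateDensity_Icc_zero_one hn)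

lemma volume_real_le_cakeval_lateDensity (hn : 2 ≤ n) {S : Set ℝ} (hS : S ⊆ Icc 0 1) :
    volume.real S ≤ (1 + (n - 1) * cakeval (lateDensity n) S) / n := by
  have hN : (2 : ℝ) ≤ n := by exact_mod_cast hn
  have hN1 : (n : ℝ) - 1 ≠ 0 := by linarith
  calc volume.real S ≤ 1 / n + volume.real (S ∩ Ici (1 / n)) :=
        measureReal_le_add_measureReal_inter_Ici hS (by positivity)
    _ = (1 + (n - 1) * cakeval (lateDensity n) S) / n := by
        rw [lateDensity, cakeval_indicator_Ici]
        field_simp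

lemma nashProd_hardProfile_le (hn : 2 ≤ n) (i₀ : Fin n) {A : Fin n → Set ℝ} (hA : IsAlloc A) :
    nashProd (hardProfile n i₀) A ≤
      (1 + (n - 1) * cakeval (lateDensity n) (A i₀)) *
        (1 - cakeval (lateDensity n) (A i₀)) ^ (n - 1) * (1 / n * (1 / (n - 1)) ^ (n - 1)) := by
  have hN : (2 : ℝ) ≤ n := by exact_mod_cast hn
  have hN1 : (0 : ℝ) < n - 1 := by linarith
  set w := cakeval (lateDensity n) (A i₀)
  have hothers : ∑ i ∈ Finset.univ.erase i₀, cakeval (lateDensity n) (A i) ≤ 1 - w := by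
    have := hA.sum_cakeval_le (f := lateDensity n) lateDensity_nonneg integrableOn_lateDensity
    rw [cakeval_lateDensity_Icc_zero_one hn,
      ← Finset.add_sum_erase _ _ (Finset.mem_univ i₀)] at this
    linarith
  have hprod : ∏ i ∈ Finset.univ.erase i₀, cakeval (lateDensity n) (A i) ≤
      ((1 - w) / (n - 1)) ^ (n - 1) := by
    have := prod_le_pow_of_sum_le _ (fun i _ => cakeval_nonneg lateDensity_nonneg (A i)) hothers
    rwa [Finset.card_erase_of_mem (Finset.mem_univ i₀), Finset.card_univ, Fintype.card_fin,
      Nat.cast_pred (by omega)] at this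
  calc nashProd (hardProfile n i₀) A
        = volume.real (A i₀) * ∏ i ∈ Finset.univ.erase i₀, cakeval (lateDensity n) (A i) :=
      nashProd_hardProfile i₀ A
    _ ≤ (1 + (n - 1) * w) / n * ((1 - w) / (n - 1)) ^ (n - 1) :=
      mul_le_mul (volume_real_le_cakeval_lateDensity hn (hA.1 i₀)) hprod
        (Finset.prod_nonneg fun i _ => cakeval_nonneg lateDensity_nonneg _)
        (div_nonneg (by nlinarith [cakeval_nonneg (lateDensity_nonneg (n := n)) (A i₀)])
          (by positivity))
    _ = (1 + (n - 1) * w) * (1 - w) ^ (n - 1) * (1 / n * (1 / (n - 1)) ^ (n - 1)) := by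
      rw [div_eq_mul_one_div (1 - w), mul_pow]
      ring

lemma volume_real_le_of_nashProd_hardProfile_ge (hn : 2 ≤ n) (i₀ : Fin n)
    {A : Fin n → Set ℝ} (hA : IsAlloc A)
    (hnash : 1 / n * (1 / (n - 1)) ^ (n - 1) ≤ nashProd (hardProfile n i₀) A) :
    volume.real (A i₀) ≤ 1 / n := by
  have hN : (2 : ℝ) ≤ n := by exact_mod_cast hn
  have hN1 : (0 : ℝ) < n - 1 := by linarith
  set w := cakeval (lateDensity n) (A i₀)
  have hv := volume_real_le_cakeval_lateDensity hn (hA.1 i₀)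
  by_contra! hlt
  have hw0 : 0 < w := by
    by_contra! hw0
    have : (1 + (n - 1) * w) / n ≤ 1 / n := by gcongr; nlinarith
    linarith
  have hbernoulli := one_add_mul_mul_one_sub_pow_lt_one hw0
    (cakeval_lateDensity_le_one hn (hA.1 i₀)) (k := n - 1) (by omega)
  rw [Nat.cast_pred (by omega)] at hbernoulli
  have hpos : (0 : ℝ) < 1 / n * (1 / (n - 1)) ^ (n - 1) := by positivity
  linarith [(nashProd_hardProfile_le hn i₀ hA).trans_lt (mul_lt_of_lt_one_left hpos hbernoulli)]

lemma IsCompleteMNW.volume_real_le_of_hardProfile (hn : 2 ≤ n) {A : Fin n → Set ℝ}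
    (hA : IsCompleteMNW (hardProfile n ⟨0, zero_lt_two.trans_le hn⟩) A) :
    volume.real (A ⟨0, zero_lt_two.trans_le hn⟩) ≤ 1 / n := by
  have hN : (2 : ℝ) ≤ n := by exact_mod_cast hn
  have hmono : Monotone fun i : ℕ => (i : ℝ) / n := fun i j h => by dsimp only; gcongr
  have h0 : (fun i : ℕ => (i : ℝ) / n) 0 = 0 := by simp
  have h1 : (fun i : ℕ => (i : ℝ) / n) n = 1 := div_self (by positivity)
  refine volume_real_le_of_nashProd_hardProfile_ge hn _ hA.1 ?_
  rw [← nashProd_hardProfile_cutAlloc_div hn]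
  exact hA.2.2 _ (isAlloc_cutAlloc hmono h0 h1) (completeAlloc_cutAlloc (by omega) hmono h0 h1)

end Truthful

/-- Lower bound of Theorem 3.1 (Lemma 3.4): for every `n ≥ 2` and `δ > 0` there are
a profile and a misreport by agent 1 (index `0`) witnessing an incentive ratio of at
least `2 - 1/n - δ` for the MNW mechanism. -/
theorem mnw_incentive_ratio_lower (n : ℕ) (hn : 2 ≤ n) (δ : ℝ) (hδ : 0 < δ) :
    ∃ (f : Fin n → ℝ → ℝ) (f1' : ℝ → ℝ),
      (∀ i, ValidDensity (f i)) ∧ ValidDensity f1' ∧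
      ∀ A : Fin n → Set ℝ, IsCompleteMNW f A →
        ∃ A' : Fin n → Set ℝ,
          IsCompleteMNW (Function.update f ⟨0, by omega⟩ f1') A' ∧
          (2 - 1 / (n : ℝ) - δ) * cakeval (f ⟨0, by omega⟩) (A ⟨0, by omega⟩) ≤
            cakeval (f ⟨0, by omega⟩) (A' ⟨0, by omega⟩) := by
  refine ⟨hardProfile n ⟨0, by omega⟩, lateDensity n, validDensity_hardProfile hn _,
    validDensity_lateDensity hn, fun A hA => ⟨cutAlloc n (misreportCuts n), ?_, ?_⟩⟩
  · rw [hardProfile, Function.update_idem, Function.update_eq_self_iff.2 rfl]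
    exact isCompleteMNW_cutAlloc_misreportCuts hn
  · have htruth := hA.volume_real_le_of_hardProfile hn
    have hN : (2 : ℝ) ≤ n := by exact_mod_cast hn
    rw [hardProfile, Function.update_self, cakeval_one, cakeval_one,
      volume_real_cutAlloc_misreportCuts_zero hn]
    have hcoef : 0 ≤ 2 - 1 / (n : ℝ) := by
      rw [sub_nonneg, div_le_iff₀ (by positivity)]
      linarith
    calc (2 - 1 / n - δ) * volume.real (A ⟨0, by omega⟩)
        ≤ (2 - 1 / n) * volume.real (A ⟨0, by omega⟩) :=
          mul_le_mul_of_nonneg_right (by linarith) measureReal_nonneg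
      _ ≤ (2 - 1 / n) * (1 / n) := mul_le_mul_of_nonneg_left htruth hcoef
      _ = (2 - 1 / n) / n := by ring
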